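/- arXiv:1704.04821 — 2 statements merged into one kernel-verified Lean document; each statement's English description precedes it below -/
import Mathlib

section
/- Let λ > 0 and let φ : [0,1] → ℝ be continuous on [0,1] and twice differentiable on (0,1). If φ''(t) ≥ −λ·φ'(t) for all t ∈ (0,1), then for all t ∈ [0,1]: φ(t) ≤ φ(0) + (φ(1) − φ(0))·(1 − exp(−λt))/(1 − exp(−λ)). -/
/-!
`φ'' + λφ' ≥ 0` says exactly that `e^{λt} φ'` is nondecreasing. The comparison function
`ψ(t) = φ(0) + (φ(1) - φ(0)) (1 - e^{-λt}) / (1 - e^{-λ})` agrees with `φ` at both endpoints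
and `e^{λt} ψ'` is constant, so `e^{λt} (φ - ψ)'` is nondecreasing too, and a maximum principle
for such functions gives `φ - ψ ≤ 0`.
-/

open Set Real

lemma monotoneOn_exp_mul_deriv {f : ℝ → ℝ} {lam a b : ℝ}
    (hd2 : ∀ t ∈ Ioo a b, DifferentiableAt ℝ (deriv f) t)
    (hineq : ∀ t ∈ Ioo a b, -lam * deriv f t ≤ deriv (deriv f) t) :
    MonotoneOn (fun t => exp (lam * t) * deriv f t) (Ioo a b) := by
  have hderiv : ∀ t ∈ Ioo a b, HasDerivAt (fun t => exp (lam * t) * deriv f t)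
      (exp (lam * t) * (deriv (deriv f) t + lam * deriv f t)) t := fun t ht => by
    have hexp := ((hasDerivAt_id' t).const_mul lam).exp
    exact (hexp.fun_mul (hd2 t ht).hasDerivAt).congr_deriv (by ring)
  refine monotoneOn_of_hasDerivWithinAt_nonneg (convex_Ioo a b)
    (f' := fun t => exp (lam * t) * (deriv (deriv f) t + lam * deriv f t))
    (fun t ht => (hderiv t ht).continuousAt.continuousWithinAt)
    (fun t ht => ?_) fun t ht => ?_ <;> simp only [interior_Ioo] at ht ⊢
  · exact (hderiv t ht).hasDerivWithinAt
  · exact mul_nonneg (exp_pos _).le (by linarith [hineq t ht])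

/-- Maximum principle: at a positive interior maximum `c` of `h`, `w h'` vanishes, so being
nondecreasing it forces `h' ≤ 0` on `(a, c)`, whence `h c ≤ h a`. -/
lemma nonpos_of_monotoneOn_weighted_deriv {h w : ℝ → ℝ} {a b : ℝ}
    (hc : ContinuousOn h (Icc a b)) (hd : ∀ t ∈ Ioo a b, DifferentiableAt ℝ h t)
    (hw : ∀ t ∈ Ioo a b, 0 < w t) (hmono : MonotoneOn (fun t => w t * deriv h t) (Ioo a b))
    (ha : h a ≤ 0) (hb : h b ≤ 0) : ∀ t ∈ Icc a b, h t ≤ 0 := by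
  intro t ht
  by_contra! hpos
  obtain ⟨c, hcI, hmax⟩ := isCompact_Icc.exists_isMaxOn ⟨t, ht⟩ hc
  have hc_pos : 0 < h c := hpos.trans_le (hmax ht)
  have hc_mem : c ∈ Ioo a b := by
    refine ⟨hcI.1.lt_of_ne ?_, hcI.2.lt_of_ne ?_⟩ <;> rintro rfl <;> linarith
  have hderiv_c : deriv h c = 0 := (hmax.isLocalMax (Icc_mem_nhds hc_mem.1 hc_mem.2)).deriv_eq_zero
  have hderiv_nonpos : ∀ s ∈ Ioo a c, deriv h s ≤ 0 := fun s hs => by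
    have hs' : s ∈ Ioo a b := ⟨hs.1, hs.2.trans hc_mem.2⟩
    have := hmono hs' hc_mem hs.2.le
    simp only [hderiv_c, mul_zero] at this
    exact nonpos_of_mul_nonpos_right this (hw s hs')
  have hanti : AntitoneOn h (Icc a c) := by
    refine antitoneOn_of_deriv_nonpos (convex_Icc a c) (hc.mono (Icc_subset_Icc_right hcI.2))
      (fun s hs => ?_) fun s hs => ?_ <;> rw [interior_Icc] at hs
    · exact (hd s ⟨hs.1, hs.2.trans hc_mem.2⟩).differentiableWithinAt
    · exact hderiv_nonpos s hs
  linarith [hanti (left_mem_Icc.2 hcI.1) (right_mem_Icc.2 hcI.1) hcI.1]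

/-- Lemma 5.1 (ii) of the paper: comparison lemma for `φ'' ≥ -λ φ'` with `λ > 0`. -/
theorem comparison_lemma_backward
    (lam : ℝ) (hlam : 0 < lam) (phi : ℝ → ℝ)
    (hc : ContinuousOn phi (Set.Icc 0 1))
    (hd : ∀ t ∈ Set.Ioo (0:ℝ) 1, DifferentiableAt ℝ phi t)
    (hd2 : ∀ t ∈ Set.Ioo (0:ℝ) 1, DifferentiableAt ℝ (deriv phi) t)
    (hineq : ∀ t ∈ Set.Ioo (0:ℝ) 1, deriv (deriv phi) t ≥ -lam * deriv phi t) :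
    ∀ t ∈ Set.Icc (0:ℝ) 1,
      phi t ≤ phi 0 + (phi 1 - phi 0) *
        (1 - Real.exp (-(lam * t))) / (1 - Real.exp (-lam)) := by
  have hden : 0 < 1 - exp (-lam) := by linarith [exp_lt_one_iff.2 (neg_lt_zero.2 hlam)]
  set K := (phi 1 - phi 0) / (1 - exp (-lam))
  set psi : ℝ → ℝ :=
    fun s => phi 0 + (phi 1 - phi 0) * (1 - exp (-(lam * s))) / (1 - exp (-lam))
  have hpsi : ∀ s, HasDerivAt psi (K * lam * exp (-(lam * s))) s := fun s => by
    have := (((hasDerivAt_id' s).const_mul lam).fun_neg.exp.const_sub 1).const_mul (phi 1 - phi 0)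
    exact ((this.div_const (1 - exp (-lam))).const_add (phi 0)).congr_deriv (by simp only [K]; ring)
  have hmono :
      MonotoneOn (fun s => exp (lam * s) * deriv (fun s => phi s - psi s) s) (Ioo 0 1) := by
    refine ((monotoneOn_exp_mul_deriv hd2 hineq).add_const (-(K * lam))).congr fun s hs => ?_
    simp only [deriv_fun_sub (hd s hs) (hpsi s).differentiableAt, (hpsi s).deriv]
    have hexp : exp (lam * s) * exp (-(lam * s)) = 1 := by
      rw [← exp_add, add_neg_cancel, exp_zero]
    linear_combination K * lam * hexp
  intro t ht
  refine sub_nonpos.1 (nonpos_of_monotoneOn_weighted_deriv ?_ ?_ (fun s _ => exp_pos (lam * s))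
    hmono ?_ ?_ t ht)
  · exact hc.sub (by fun_prop)
  · exact fun s hs => (hd s hs).sub (hpsi s).differentiableAt
  · simp [psi]
  · simp [psi, hden.ne']
end

section
/- Fix α > 0, t ∈ (0,1], and let f : ℝ → ℝ be measurable, bounded, nonnegative, compactly supported, and not almost everywhere zero. Set γ(t) := 2α/(1 − exp(−2αt)), p_t(x,z) := √(γ(t)/(2π))·exp(−γ(t)·(z − exp(−αt)·x)²/2), and f_t(x) := ∫_ℝ p_t(x,z)·f(z) dz. Then for every x ∈ ℝ: (d/dx)² (log f_t)(x) = γ(t)²·exp(−2αt)·( f_t(x)·∫_ℝ z²·f(z)·p_t(x,z) dz − (∫_ℝ z·f(z)·p_t(x,z) dz)² ) / f_t(x)² − γ(t)·exp(−2αt). -/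
open MeasureTheory

noncomputable section

/-- `γ(t) = 2α/(1 - exp(-2αt))`. -/
def gam (α t : ℝ) : ℝ := 2 * α / (1 - Real.exp (-(2 * α * t)))

/-- The transition density of the stationary one-dimensional Ornstein–Uhlenbeck
process: `p_t(x,z) = √(γ(t)/(2π)) exp(-γ(t)(z - exp(-αt)x)²/2)`. -/
def ouKernel (α t x z : ℝ) : ℝ :=
  Real.sqrt (gam α t / (2 * Real.pi)) *
    Real.exp (-(gam α t * (z - Real.exp (-(α * t)) * x)^2 / 2))

/-- `f_t(x) = ∫ p_t(x,z) f(z) dz`. -/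
def ouPotential (α : ℝ) (f : ℝ → ℝ) (t x : ℝ) : ℝ :=
  ∫ z, ouKernel α t x z * f z

/-!
Differentiating under the integral sign, which is legitimate because `f` is bounded with compact
support, `∂ₓ p_t(x,z) = s p_t(x,z)` and `∂ₓ (s p_t(x,z)) = (s² - γ e^{-2αt}) p_t(x,z)` for the score
`s = γ e^{-αt} (z - e^{-αt} x)`. As `f_t > 0`, `(log f_t)'' = (f_t'' f_t - f_t'²) / f_t²`, and
expanding the polynomials in `z` into the moments `∫ zⁿ f(z) p_t(x,z) dz` gives the formula.
-/

open Filter Topology Function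

section CompactSupport

variable {X : Type*} [TopologicalSpace X] [MeasurableSpace X]
  {μ : Measure X} [IsFiniteMeasureOnCompacts μ] {f : X → ℝ}

theorem HasCompactSupport.integrable_of_bounded (hsupp : HasCompactSupport f)
    (hf : AEStronglyMeasurable f μ) (hbdd : ∃ C, ∀ z, ‖f z‖ ≤ C) : Integrable f μ := by
  obtain ⟨C, hC⟩ := hbdd
  rw [← integrableOn_iff_integrable_of_support_subset (subset_tsupport f)]
  exact Measure.integrableOn_of_bounded hsupp.isCompact.measure_lt_top.ne hf (ae_of_all _ hC)

theorem HasCompactSupport.integrable_continuous_mul [OpensMeasurableSpace X] [T2Space X]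
    (hsupp : HasCompactSupport f) (hf : AEStronglyMeasurable f μ) (hbdd : ∃ C, ∀ z, ‖f z‖ ≤ C)
    {h : X → ℝ} (hh : Continuous h) : Integrable (fun z => h z * f z) μ := by
  rw [← integrableOn_iff_integrable_of_support_subset
    ((support_mul_subset_right h f).trans (subset_tsupport f))]
  exact (hsupp.integrable_of_bounded hf hbdd).integrableOn.continuousOn_mul hh.continuousOn
    hsupp.isCompact

theorem hasDerivAt_integral_mul_of_hasCompactSupport [OpensMeasurableSpace X] [T2Space X]
    {k k' : ℝ → X → ℝ}
    (hk : ∀ x, Continuous (k x)) (hk' : Continuous fun p : ℝ × X => k' p.1 p.2)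
    (hderiv : ∀ x z, HasDerivAt (fun x => k x z) (k' x z) x)
    (hsupp : HasCompactSupport f) (hf : AEStronglyMeasurable f μ)
    (hbdd : ∃ C, ∀ z, ‖f z‖ ≤ C) (x₀ : ℝ) :
    HasDerivAt (fun x => ∫ z, k x z * f z ∂μ) (∫ z, k' x₀ z * f z ∂μ) x₀ := by
  obtain ⟨Q, hQ⟩ := ((isCompact_closedBall x₀ 1).prod hsupp.isCompact).exists_bound_of_continuousOn
    hk'.continuousOn
  have hbound : ∀ᵐ z ∂μ, ∀ x ∈ Metric.ball x₀ 1, ‖k' x z * f z‖ ≤ Q * ‖f z‖ := by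
    refine ae_of_all _ fun z x hx => ?_
    by_cases hz : z ∈ tsupport f
    · rw [norm_mul]
      exact mul_le_mul_of_nonneg_right (hQ (x, z) ⟨Metric.ball_subset_closedBall hx, hz⟩)
        (norm_nonneg _)
    · simp [image_eq_zero_of_notMem_tsupport hz]
  exact (hasDerivAt_integral_of_dominated_loc_of_deriv_le (Metric.ball_mem_nhds x₀ one_pos)
    (Eventually.of_forall fun x => (hk x).aestronglyMeasurable.mul hf)
    (hsupp.integrable_continuous_mul hf hbdd (hk x₀))
    ((hk'.comp (Continuous.prodMk_right x₀)).aestronglyMeasurable.mul hf) hbound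
    ((hsupp.integrable_of_bounded hf hbdd).norm.const_mul Q)
    (ae_of_all _ fun z x _ => (hderiv x z).mul_const (f z))).2

end CompactSupport

theorem iteratedDeriv_two_log {F F' : ℝ → ℝ} {F'' x : ℝ}
    (hF : ∀ᶠ y in 𝓝 x, HasDerivAt F (F' y) y) (hF' : HasDerivAt F' F'' x) (hx : F x ≠ 0) :
    iteratedDeriv 2 (fun y => Real.log (F y)) x = (F'' * F x - F' x ^ 2) / F x ^ 2 := by
  have hne : ∀ᶠ y in 𝓝 x, F y ≠ 0 := hF.self_of_nhds.continuousAt.eventually_ne hx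
  have hlog : deriv (fun y => Real.log (F y)) =ᶠ[𝓝 x] fun y => F' y / F y :=
    (hF.and hne).mono fun y hy => (hy.1.log hy.2).deriv
  rw [iteratedDeriv_succ, iteratedDeriv_one, hlog.deriv_eq,
    (hF'.fun_div hF.self_of_nhds hx).deriv]
  ring

theorem integral_quadratic_mul {μ : Measure ℝ} {w : ℝ → ℝ} (a b d : ℝ)
    (hw : ∀ n ≤ 2, Integrable (fun z => z ^ n * w z) μ) :
    ∫ z, (a + b * z + d * z ^ 2) * w z ∂μ
      = a * (∫ z, w z ∂μ) + b * (∫ z, z * w z ∂μ) + d * ∫ z, z ^ 2 * w z ∂μ := by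
  have h0 : Integrable w μ := by simpa using hw 0 (by norm_num)
  have h1 : Integrable (fun z => z * w z) μ := by simpa using hw 1 (by norm_num)
  have h2 := hw 2 le_rfl
  simp only [add_mul, mul_assoc]
  rw [integral_add (by fun_prop) (by fun_prop), integral_add (by fun_prop) (by fun_prop),
    integral_const_mul, integral_const_mul, integral_const_mul]

section OrnsteinUhlenbeck

variable {α t : ℝ}

/-- `∂ₓ log p_t(x, z)`. -/
def ouScore (α t x z : ℝ) : ℝ :=
  gam α t * Real.exp (-(α * t)) * (z - Real.exp (-(α * t)) * x)

theorem gam_pos (hα : 0 < α) (ht : 0 < t) : 0 < gam α t := by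
  have : Real.exp (-(2 * α * t)) < 1 := Real.exp_lt_one_iff.mpr (by nlinarith)
  exact div_pos (by linarith) (by linarith)

theorem ouKernel_pos (hα : 0 < α) (ht : 0 < t) (x z : ℝ) : 0 < ouKernel α t x z :=
  mul_pos (Real.sqrt_pos.mpr (div_pos (gam_pos hα ht) (by positivity))) (Real.exp_pos _)

@[fun_prop]
theorem Continuous.ouKernel {Y : Type*} [TopologicalSpace Y] {u v : Y → ℝ} (hu : Continuous u)
    (hv : Continuous v) : Continuous fun y => ouKernel α t (u y) (v y) := by
  unfold _root_.ouKernel; fun_prop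

@[fun_prop]
theorem Continuous.ouScore {Y : Type*} [TopologicalSpace Y] {u v : Y → ℝ} (hu : Continuous u)
    (hv : Continuous v) : Continuous fun y => ouScore α t (u y) (v y) := by
  unfold _root_.ouScore; fun_prop

theorem hasDerivAt_ouKernel (α t x z : ℝ) :
    HasDerivAt (fun x => ouKernel α t x z) (ouScore α t x z * ouKernel α t x z) x := by
  have h := (((((hasDerivAt_id x).const_mul (Real.exp (-(α * t)))).const_sub z).pow 2).const_mul
    (gam α t)).div_const 2 |>.fun_neg |>.exp |>.const_mul (Real.sqrt (gam α t / (2 * Real.pi)))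
  refine h.congr_deriv ?_
  simp only [ouScore, ouKernel, id, Pi.pow_apply]
  ring

theorem hasDerivAt_ouScore_mul_ouKernel (α t x z : ℝ) :
    HasDerivAt (fun x => ouScore α t x z * ouKernel α t x z)
      ((ouScore α t x z ^ 2 - gam α t * Real.exp (-(α * t)) ^ 2) * ouKernel α t x z) x := by
  have hscore : HasDerivAt (fun x => ouScore α t x z) (-(gam α t * Real.exp (-(α * t)) ^ 2)) x := by
    have h := (((hasDerivAt_id x).const_mul (Real.exp (-(α * t)))).const_sub z).const_mul
      (gam α t * Real.exp (-(α * t)))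
    refine h.congr_deriv ?_
    ring
  refine (hscore.mul (hasDerivAt_ouKernel α t x z)).congr_deriv ?_
  ring

end OrnsteinUhlenbeck

section Potential

variable {α t : ℝ} {f : ℝ → ℝ} (hsupp : HasCompactSupport f) (hf : AEStronglyMeasurable f)
  (hbdd : ∃ C, ∀ z, ‖f z‖ ≤ C)
include hsupp hf hbdd

theorem ouPotential_pos (hα : 0 < α) (ht : 0 < t) (hnn : ∀ z, 0 ≤ f z)
    (hne : ¬ f =ᵐ[volume] 0) (x : ℝ) : 0 < ouPotential α f t x := by
  have hsupp_eq : support (fun z => ouKernel α t x z * f z) = support f := by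
    ext z; simp [(ouKernel_pos hα ht x z).ne']
  rw [ouPotential, integral_pos_iff_support_of_nonneg
    (fun z => mul_nonneg (ouKernel_pos hα ht x z).le (hnn z))
    (hsupp.integrable_continuous_mul hf hbdd (by fun_prop)), hsupp_eq, pos_iff_ne_zero]
  exact mt (Measure.measure_support_eq_zero_iff volume).mp hne

theorem hasDerivAt_ouPotential (x : ℝ) :
    HasDerivAt (ouPotential α f t) (∫ z, ouScore α t x z * ouKernel α t x z * f z) x :=
  hasDerivAt_integral_mul_of_hasCompactSupport (by fun_prop) (by fun_prop)
    (hasDerivAt_ouKernel α t) hsupp hf hbdd x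

theorem hasDerivAt_integral_ouScore_mul_ouKernel_mul (x : ℝ) :
    HasDerivAt (fun y => ∫ z, ouScore α t y z * ouKernel α t y z * f z)
      (∫ z, (ouScore α t x z ^ 2 - gam α t * Real.exp (-(α * t)) ^ 2) * ouKernel α t x z * f z)
      x :=
  hasDerivAt_integral_mul_of_hasCompactSupport (by fun_prop) (by fun_prop)
    (hasDerivAt_ouScore_mul_ouKernel α t) hsupp hf hbdd x

theorem integral_quadratic_mul_ouKernel_mul (x a b d : ℝ) :
    ∫ z, (a + b * z + d * z ^ 2) * ouKernel α t x z * f z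
      = a * ouPotential α f t x + b * (∫ z, z * f z * ouKernel α t x z)
        + d * ∫ z, z ^ 2 * f z * ouKernel α t x z := by
  have hw (n : ℕ) (_ : n ≤ 2) : Integrable fun z => z ^ n * (f z * ouKernel α t x z) :=
    (hsupp.integrable_continuous_mul hf hbdd (h := fun z => z ^ n * ouKernel α t x z)
      (by fun_prop)).congr (ae_of_all _ fun z => by ring)
  rw [ouPotential]
  convert integral_quadratic_mul a b d hw using 1 <;>
    simp only [mul_assoc, mul_comm (ouKernel α t x _) (f _)]

theorem integral_ouScore_mul_ouKernel_mul (x : ℝ) :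
    ∫ z, ouScore α t x z * ouKernel α t x z * f z
      = gam α t * Real.exp (-(α * t)) *
          ((∫ z, z * f z * ouKernel α t x z) - Real.exp (-(α * t)) * x * ouPotential α f t x) := by
  set c := Real.exp (-(α * t))
  calc ∫ z, ouScore α t x z * ouKernel α t x z * f z
      = ∫ z, (-(gam α t * c ^ 2 * x) + gam α t * c * z + 0 * z ^ 2) * ouKernel α t x z * f z := by
        congr 1 with z; simp only [ouScore]; ring
    _ = _ := by rw [integral_quadratic_mul_ouKernel_mul hsupp hf hbdd]; ring

theorem integral_ouScore_sq_sub_mul_ouKernel_mul (x : ℝ) :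
    ∫ z, (ouScore α t x z ^ 2 - gam α t * Real.exp (-(α * t)) ^ 2) * ouKernel α t x z * f z
      = gam α t ^ 2 * Real.exp (-(α * t)) ^ 2 * ((∫ z, z ^ 2 * f z * ouKernel α t x z)
          - 2 * Real.exp (-(α * t)) * x * (∫ z, z * f z * ouKernel α t x z)
          + Real.exp (-(α * t)) ^ 2 * x ^ 2 * ouPotential α f t x)
        - gam α t * Real.exp (-(α * t)) ^ 2 * ouPotential α f t x := by
  set c := Real.exp (-(α * t))
  set g := gam α t
  calc ∫ z, (ouScore α t x z ^ 2 - g * c ^ 2) * ouKernel α t x z * f z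
      = ∫ z, ((g ^ 2 * c ^ 4 * x ^ 2 - g * c ^ 2) + (-2 * g ^ 2 * c ^ 3 * x) * z
          + g ^ 2 * c ^ 2 * z ^ 2) * ouKernel α t x z * f z := by
        congr 1 with z; simp only [ouScore]; ring
    _ = _ := by rw [integral_quadratic_mul_ouKernel_mul hsupp hf hbdd]; ring

end Potential

/-- The explicit variance formula for the second logarithmic derivative of `f_t`
established in the proof of Lemma 5.2 (iii) of the paper. -/
theorem ou_log_second_derivative_variance_formula
    (α t : ℝ) (hα : 0 < α) (ht : t ∈ Set.Ioc (0:ℝ) 1)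
    (f : ℝ → ℝ) (hmeas : Measurable f)
    (hbdd : ∃ C, ∀ z, f z ≤ C) (hnn : ∀ z, 0 ≤ f z)
    (hsupp : HasCompactSupport f)
    (hne : ¬ (f =ᵐ[volume] 0)) :
    ∀ x : ℝ,
      iteratedDeriv 2 (fun y => Real.log (ouPotential α f t y)) x
        = gam α t ^ 2 * Real.exp (-(2 * α * t)) *
            (ouPotential α f t x * (∫ z, z^2 * f z * ouKernel α t x z)
              - (∫ z, z * f z * ouKernel α t x z)^2) / (ouPotential α f t x)^2
          - gam α t * Real.exp (-(2 * α * t)) := by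
  intro x
  obtain ⟨C, hC⟩ := hbdd
  have hbdd' : ∃ C, ∀ z, ‖f z‖ ≤ C := ⟨C, fun z => (Real.norm_of_nonneg (hnn z)).trans_le (hC z)⟩
  have hf : AEStronglyMeasurable f := hmeas.aestronglyMeasurable
  have hpos := ouPotential_pos hsupp hf hbdd' hα ht.1 hnn hne x
  have hexp : Real.exp (-(2 * α * t)) = Real.exp (-(α * t)) ^ 2 := by
    rw [← Real.exp_nat_mul]; ring_nf
  rw [iteratedDeriv_two_log (.of_forall (hasDerivAt_ouPotential hsupp hf hbdd'))
    (hasDerivAt_integral_ouScore_mul_ouKernel_mul hsupp hf hbdd' x) hpos.ne',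
    integral_ouScore_mul_ouKernel_mul hsupp hf hbdd',
    integral_ouScore_sq_sub_mul_ouKernel_mul hsupp hf hbdd', hexp]
  field_simp
  ring
end
end
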